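/- Assume N_E : E → ℝ and N_F : F → ℝ satisfy N_F(Φ x) = N_E(x) for all x ∈ E. Then the optimal-control quotients correspond: for every u ∈ E, ‖Φ u‖² / N_F(T_F(Φ u))² = ‖u‖² / N_E(T_E u)². -/

import Mathlib

/-!
A surjective map that preserves the norm and reflects and preserves the order carries the
least-norm element above `u` to the least-norm element above `Φ u`. By uniqueness of the
obstacle solution this gives `Φ (T_E u) = T_F (Φ u)`, and the quotients agree term by term.
-/

/-- The defining property of the obstacle solution `T u = m`. -/
def IsLeastNormAbove {α : Type*} [Norm α] [LE α] (u m : α) : Prop :=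
  u ≤ m ∧ ∀ v, u ≤ v → ‖m‖ ≤ ‖v‖

theorem IsLeastNormAbove.map {α β : Type*} [Norm α] [LE α] [Norm β] [LE β] {u m : α}
    (h : IsLeastNormAbove u m) {Φ : α → β} (hsurj : Function.Surjective Φ)
    (hnorm : ∀ x, ‖Φ x‖ = ‖x‖) (horder : ∀ x y, x ≤ y ↔ Φ x ≤ Φ y) :
    IsLeastNormAbove (Φ u) (Φ m) := by
  refine ⟨(horder u m).mp h.1, fun v hv => ?_⟩
  obtain ⟨w, rfl⟩ := hsurj v
  rw [hnorm, hnorm]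
  exact h.2 w ((horder u w).mpr hv)

theorem optimal_control_quotient_conformal_invariance_general
    {E F : Type*} [NormedAddCommGroup E] [InnerProductSpace ℝ E] [PartialOrder E]
    [NormedAddCommGroup F] [InnerProductSpace ℝ F] [PartialOrder F]
    (TE : E → E)
    (hTEle : ∀ u : E, u ≤ TE u)
    (hTEmin : ∀ u v : E, u ≤ v → ‖TE u‖ ≤ ‖v‖)
    (TF : F → F)
    (hTFuniq : ∀ u m : F, u ≤ m → (∀ v : F, u ≤ v → ‖m‖ ≤ ‖v‖) → m = TF u)
    (Φ : E →ₗ[ℝ] F)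
    (hbij : Function.Bijective Φ)
    (hiso : ∀ x : E, ‖Φ x‖ = ‖x‖)
    (horder : ∀ x y : E, x ≤ y ↔ Φ x ≤ Φ y)
    (NE : E → ℝ) (NF : F → ℝ)
    (hN : ∀ x : E, NF (Φ x) = NE x) :
    ∀ u : E, ‖Φ u‖ ^ 2 / NF (TF (Φ u)) ^ 2 = ‖u‖ ^ 2 / NE (TE u) ^ 2 := by
  intro u
  have hleast : IsLeastNormAbove (Φ u) (Φ (TE u)) :=
    IsLeastNormAbove.map ⟨hTEle u, hTEmin u⟩ hbij.2 hiso horder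
  have hcommute : Φ (TE u) = TF (Φ u) := hTFuniq _ _ hleast.1 hleast.2
  rw [← hcommute, hN, hiso]

/-- The optimal-control quotients correspond under a linear isometric order
isomorphism `Φ` compatible with the norms `N_E`, `N_F`. -/
theorem optimal_control_quotient_conformal_invariance
    {E F : Type*} [NormedAddCommGroup E] [InnerProductSpace ℝ E] [PartialOrder E]
    [NormedAddCommGroup F] [InnerProductSpace ℝ F] [PartialOrder F]
    (haddE : ∀ x y z : E, x ≤ y → x + z ≤ y + z)
    (hsmulE : ∀ (c : ℝ) (x : E), 0 ≤ x → 0 ≤ c → 0 ≤ c • x)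
    (haddF : ∀ x y z : F, x ≤ y → x + z ≤ y + z)
    (hsmulF : ∀ (c : ℝ) (x : F), 0 ≤ x → 0 ≤ c → 0 ≤ c • x)
    (TE : E → E)
    (hTEle : ∀ u : E, u ≤ TE u)
    (hTEmin : ∀ u v : E, u ≤ v → ‖TE u‖ ≤ ‖v‖)
    (hTEuniq : ∀ u m : E, u ≤ m → (∀ v : E, u ≤ v → ‖m‖ ≤ ‖v‖) → m = TE u)
    (TF : F → F)
    (hTFle : ∀ u : F, u ≤ TF u)
    (hTFmin : ∀ u v : F, u ≤ v → ‖TF u‖ ≤ ‖v‖)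
    (hTFuniq : ∀ u m : F, u ≤ m → (∀ v : F, u ≤ v → ‖m‖ ≤ ‖v‖) → m = TF u)
    (Φ : E →ₗ[ℝ] F)
    (hbij : Function.Bijective Φ)
    (hiso : ∀ x : E, ‖Φ x‖ = ‖x‖)
    (horder : ∀ x y : E, x ≤ y ↔ Φ x ≤ Φ y)
    (NE : E → ℝ) (NF : F → ℝ)
    (hN : ∀ x : E, NF (Φ x) = NE x) :
    ∀ u : E, ‖Φ u‖ ^ 2 / NF (TF (Φ u)) ^ 2 = ‖u‖ ^ 2 / NE (TE u) ^ 2 :=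
  optimal_control_quotient_conformal_invariance_general TE hTEle hTEmin TF hTFuniq Φ hbij hiso
    horder NE NF hN
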